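/- Quaternion algebra of self-dual 2-forms. Let e⁰, e¹, e², e³ be covectors on ℝ⁴ (vectors e^a ∈ ℝ⁴ with components e^a_μ) whose component matrix is invertible. Define η_{μν} = −e⁰_μ e⁰_ν + e¹_μ e¹_ν + e²_μ e²_ν + e³_μ e³_ν with inverse matrix η^{μν}, and for i = 1, 2, 3 define the complex 2-forms Σ^i_{μν} = i(e⁰_μ e^i_ν − e⁰_ν e^i_μ) − Σ_{j,k} ε^{ijk} e^j_μ e^k_ν. Then, raising an index via Σ^i_μ{}^ν = Σ_ρ Σ^i_{μρ} η^{ρν}, the endomorphisms satisfy the imaginary quaternion algebra: Σ_ρ Σ^i_μ{}^ρ Σ^j_ρ{}^ν = −δ^{ij} δ_μ^ν + Σ_k ε^{ijk} Σ^k_μ{}^ν for all i, j ∈ {1,2,3} and all μ, ν. -/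
import Mathlib


open Matrix Complex

noncomputable section

namespace QuatAlgebra

/-- The alternating symbol on three indices, `eps3 0 1 2 = 1`. -/
def eps3 (i j k : Fin 3) : ℝ :=
  ((j.val : ℝ) - i.val) * ((k.val : ℝ) - j.val) * ((k.val : ℝ) - i.val) / 2

/-- The Minkowski-signature metric `η_{μν} = −e⁰_μ e⁰_ν + Σ_i e^i_μ e^i_ν`
built from a coframe `E` (rows are the covectors `e^a`). -/
def eta (E : Fin 4 → Fin 4 → ℝ) : Matrix (Fin 4) (Fin 4) ℝ := fun μ ν =>
  -(E 0 μ * E 0 ν) + E 1 μ * E 1 ν + E 2 μ * E 2 ν + E 3 μ * E 3 ν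

/-- The self-dual 2-forms
`Σ^i_{μν} = i(e⁰_μ e^i_ν − e⁰_ν e^i_μ) − ε^{ijk} e^j_μ e^k_ν` for `i = 1,2,3`. -/
def Sig (E : Fin 4 → Fin 4 → ℝ) (i : Fin 3) (μ ν : Fin 4) : ℂ :=
  Complex.I * ((E 0 μ : ℂ) * (E i.succ ν : ℂ) - (E 0 ν : ℂ) * (E i.succ μ : ℂ))
    - ∑ j, ∑ k, (eps3 i j k : ℂ) * (E j.succ μ : ℂ) * (E k.succ ν : ℂ)

/-- `Σ^i` with the second index raised by `η⁻¹`. -/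
def SigUp (E : Fin 4 → Fin 4 → ℝ) (i : Fin 3) (μ ν : Fin 4) : ℂ :=
  ∑ ρ, Sig E i μ ρ * ((eta E)⁻¹ ρ ν : ℂ)

/-- Minkowski diagonal matrix. -/
def Dm : Matrix (Fin 4) (Fin 4) ℝ := Matrix.diagonal (fun a => if a = 0 then -1 else 1)

lemma eta_eq (E : Fin 4 → Fin 4 → ℝ) : eta E = (Matrix.of E)ᵀ * Dm * Matrix.of E := by
  ext μ ν
  simp [eta, Dm, Matrix.mul_apply, Matrix.diagonal, Fin.sum_univ_four]

lemma Dm_mul_Dm : Dm * Dm = 1 := by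
  rw [Dm, Matrix.diagonal_mul_diagonal,
    show (fun i : Fin 4 => (if i = 0 then (-1:ℝ) else 1) * if i = 0 then -1 else 1) = fun _ => 1 by
      funext i; split <;> norm_num,
    Matrix.diagonal_one]

lemma det_Dm : Dm.det = -1 := by
  simp [Dm, Matrix.det_diagonal, Fin.prod_univ_four]


lemma det_eta (E : Fin 4 → Fin 4 → ℝ) (hE : (Matrix.of E).det ≠ 0) :
    (eta E).det = -((Matrix.of E).det)^2 := by
  rw [eta_eq, Matrix.det_mul, Matrix.det_mul, det_Dm, Matrix.det_transpose]
  ring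

/-- Complexified coframe matrix. -/
def B (E : Fin 4 → Fin 4 → ℝ) : Matrix (Fin 4) (Fin 4) ℂ :=
  (Matrix.of E).map Complex.ofRealHom

def Dc : Matrix (Fin 4) (Fin 4) ℂ := Dm.map Complex.ofRealHom

/-- Complexified inverse metric. -/
lemma etaInv_map (E : Fin 4 → Fin 4 → ℝ) (hE : (Matrix.of E).det ≠ 0) :
    ((eta E)⁻¹).map Complex.ofRealHom = (B E)⁻¹ * Dc * ((B E)ᵀ)⁻¹ := by
  have hdet : IsUnit (eta E).det := by
    rw [det_eta E hE]
    exact (by simpa using pow_ne_zero 2 hE : -((Matrix.of E).det)^2 ≠ 0).isUnit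
  have h1 : eta E * (eta E)⁻¹ = 1 := Matrix.mul_nonsing_inv _ hdet
  have h2 : (eta E).map Complex.ofRealHom * ((eta E)⁻¹).map Complex.ofRealHom = 1 := by
    rw [← Matrix.map_mul, h1, Matrix.map_one _ (map_zero _) (map_one _)]
  have h3 : ((eta E)⁻¹).map Complex.ofRealHom = ((eta E).map Complex.ofRealHom)⁻¹ :=
    (Matrix.inv_eq_right_inv h2).symm
  have hDc : Dc * Dc = 1 := by
    rw [Dc, ← Matrix.map_mul, Dm_mul_Dm, Matrix.map_one _ (map_zero _) (map_one _)]
  have hDcinv : Dc⁻¹ = Dc := (Matrix.inv_eq_right_inv hDc)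
  have h4 : (eta E).map Complex.ofRealHom = (B E)ᵀ * Dc * B E := by
    rw [eta_eq, B, Dc, Matrix.map_mul, Matrix.map_mul, Matrix.transpose_map]
  rw [h3, h4, Matrix.mul_inv_rev, Matrix.mul_inv_rev, hDcinv, Matrix.mul_assoc]


/-- Constant self-dual matrices (`Sig` of the identity coframe). -/
def Sm (i : Fin 3) : Matrix (Fin 4) (Fin 4) ℂ :=
  Matrix.of (Sig (fun a b => if a = b then 1 else 0) i)

def Tm (i : Fin 3) : Matrix (Fin 4) (Fin 4) ℂ := Sm i * Dc

lemma Sig_matrix (E : Fin 4 → Fin 4 → ℝ) (i : Fin 3) :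
    Matrix.of (Sig E i) = (B E)ᵀ * Sm i * B E := by
  fin_cases i <;> ext μ ν <;>
    simp [Sig, Sm, B, Dc, Dm, eps3, Matrix.mul_apply, Fin.sum_univ_four,
      Fin.sum_univ_three, Fin.succ] <;> push_cast <;> ring

lemma Tm_zero : Tm 0 = !![0, I, 0, 0; I, 0, 0, 0; 0, 0, 0, -1; 0, 0, 1, 0] := by
  ext μ ν <;> fin_cases μ <;> fin_cases ν <;>
    simp [Tm, Sm, Sig, Dc, Dm, eps3, Matrix.mul_apply, Fin.sum_univ_four,
      Fin.sum_univ_three, Fin.succ, Matrix.vecHead, Matrix.vecTail] <;> norm_num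

lemma Tm_one : Tm 1 = !![0, 0, I, 0; 0, 0, 0, 1; I, 0, 0, 0; 0, -1, 0, 0] := by
  ext μ ν <;> fin_cases μ <;> fin_cases ν <;>
    simp [Tm, Sm, Sig, Dc, Dm, eps3, Matrix.mul_apply, Fin.sum_univ_four,
      Fin.sum_univ_three, Fin.succ, Matrix.vecHead, Matrix.vecTail] <;> norm_num

lemma Tm_two : Tm 2 = !![0, 0, 0, I; 0, 0, -1, 0; 0, 1, 0, 0; I, 0, 0, 0] := by
  ext μ ν <;> fin_cases μ <;> fin_cases ν <;>
    simp [Tm, Sm, Sig, Dc, Dm, eps3, Matrix.mul_apply, Fin.sum_univ_four,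
      Fin.sum_univ_three, Fin.succ, Matrix.vecHead, Matrix.vecTail] <;> norm_num

set_option maxHeartbeats 1000000 in
lemma quaternion (i j : Fin 3) :
    Tm i * Tm j
      = -(if i = j then (1:ℂ) else 0) • (1 : Matrix (Fin 4) (Fin 4) ℂ)
        + ∑ k, (eps3 i j k : ℂ) • Tm k := by
  fin_cases i <;> fin_cases j <;>
    rw [Fin.sum_univ_three] <;>
    ext μ ν <;> fin_cases μ <;> fin_cases ν <;>
    simp [Tm_zero, Tm_one, Tm_two, Matrix.mul_apply, Matrix.add_apply,
      Matrix.smul_apply, Matrix.neg_apply, Matrix.one_apply, Fin.sum_univ_four,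
      eps3, Matrix.vecHead, Matrix.vecTail, Complex.I_mul_I] <;> norm_num

lemma detB (E : Fin 4 → Fin 4 → ℝ) (hE : (Matrix.of E).det ≠ 0) :
    IsUnit (B E).det := by
  have : (B E).det = Complex.ofRealHom ((Matrix.of E).det) := by
    rw [B, show (Matrix.of E).map Complex.ofRealHom
      = Complex.ofRealHom.mapMatrix (Matrix.of E) from rfl, ← RingHom.map_det]
  rw [this]
  simpa using hE

lemma SigUp_matrix (E : Fin 4 → Fin 4 → ℝ) (hE : (Matrix.of E).det ≠ 0) (i : Fin 3) :
    Matrix.of (SigUp E i) = (B E)ᵀ * Tm i * ((B E)ᵀ)⁻¹ := by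
  have hB := detB E hE
  have h1 : Matrix.of (SigUp E i) = Matrix.of (Sig E i) * ((eta E)⁻¹).map Complex.ofRealHom := by
    ext μ ν
    simp [SigUp, Matrix.mul_apply, Matrix.map_apply]
  rw [h1, Sig_matrix, etaInv_map E hE, Tm]
  have hBB : B E * (B E)⁻¹ = 1 := Matrix.mul_nonsing_inv _ hB
  calc (B E)ᵀ * Sm i * B E * ((B E)⁻¹ * Dc * ((B E)ᵀ)⁻¹)
      = (B E)ᵀ * Sm i * (B E * (B E)⁻¹) * Dc * ((B E)ᵀ)⁻¹ := by
        simp only [Matrix.mul_assoc]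
    _ = (B E)ᵀ * (Sm i * Dc) * ((B E)ᵀ)⁻¹ := by
        rw [hBB]; simp only [Matrix.mul_one, Matrix.mul_assoc]


/-- Quaternion algebra of self-dual 2-forms:
`Σ^i_μ{}^ρ Σ^j_ρ{}^ν = −δ^{ij} δ_μ^ν + ε^{ijk} Σ^k_μ{}^ν`. -/
theorem selfdual_quaternion_algebra (E : Fin 4 → Fin 4 → ℝ)
    (hE : (Matrix.of E).det ≠ 0) :
    ∀ (i j : Fin 3) (μ ν : Fin 4),
      (∑ ρ, SigUp E i μ ρ * SigUp E j ρ ν)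
      = -(if i = j then (1 : ℂ) else 0) * (if μ = ν then (1 : ℂ) else 0)
        + ∑ k, (eps3 i j k : ℂ) * SigUp E k μ ν := by
  intro i j μ ν
  have hB := detB E hE
  have hBt : IsUnit ((B E)ᵀ).det := by rwa [Matrix.det_transpose]
  have hBtB : ((B E)ᵀ)⁻¹ * (B E)ᵀ = 1 := Matrix.nonsing_inv_mul _ hBt
  have key : Matrix.of (SigUp E i) * Matrix.of (SigUp E j)
      = -(if i = j then (1:ℂ) else 0) • (1 : Matrix (Fin 4) (Fin 4) ℂ)
        + ∑ k, (eps3 i j k : ℂ) • Matrix.of (SigUp E k) := by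
    rw [SigUp_matrix E hE i, SigUp_matrix E hE j]
    have h2 : (B E)ᵀ * Tm i * ((B E)ᵀ)⁻¹ * ((B E)ᵀ * Tm j * ((B E)ᵀ)⁻¹)
        = (B E)ᵀ * (Tm i * Tm j) * ((B E)ᵀ)⁻¹ := by
      calc (B E)ᵀ * Tm i * ((B E)ᵀ)⁻¹ * ((B E)ᵀ * Tm j * ((B E)ᵀ)⁻¹)
          = (B E)ᵀ * Tm i * (((B E)ᵀ)⁻¹ * (B E)ᵀ) * Tm j * ((B E)ᵀ)⁻¹ := by
            simp only [Matrix.mul_assoc]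
        _ = _ := by rw [hBtB]; simp only [Matrix.mul_one, Matrix.mul_assoc]
    rw [h2, quaternion i j]
    have hBBt : (B E)ᵀ * ((B E)ᵀ)⁻¹ = 1 := Matrix.mul_nonsing_inv _ hBt
    rw [Matrix.mul_add, Matrix.add_mul]
    congr 1
    · rw [Matrix.mul_smul, Matrix.smul_mul, Matrix.mul_one, hBBt]
    · rw [Matrix.mul_sum, Matrix.sum_mul]
      refine Finset.sum_congr rfl fun k _ => ?_
      rw [Matrix.mul_smul, Matrix.smul_mul, SigUp_matrix E hE k]
  calc (∑ ρ, SigUp E i μ ρ * SigUp E j ρ ν)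
      = (Matrix.of (SigUp E i) * Matrix.of (SigUp E j)) μ ν := by
        simp [Matrix.mul_apply]
    _ = (-(if i = j then (1:ℂ) else 0) • (1 : Matrix (Fin 4) (Fin 4) ℂ)
          + ∑ k, (eps3 i j k : ℂ) • Matrix.of (SigUp E k)) μ ν := by rw [key]
    _ = _ := by
        simp only [Matrix.add_apply, Matrix.smul_apply, Matrix.sum_apply,
          Matrix.one_apply, Matrix.of_apply, smul_eq_mul]

end QuatAlgebra
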